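/- arXiv:1411.7497 — 4 statements merged into one kernel-verified Lean document; each statement's English description precedes it below -/
import Mathlib

section
/- For every α ∈ (0,2), the function R₁(α) := -π·cot(πα/2)/α is strictly increasing in α, satisfies R₁(1) = 0, tends to -∞ as α → 0⁺, and tends to +∞ as α → 2⁻. -/
open Real Filter Set

/-- `R₁(α) = -π · cot(πα/2) / α`. -/
noncomputable def R1 (α : ℝ) : ℝ :=
  -π * (Real.cos (π * α / 2) / Real.sin (π * α / 2)) / α

lemma sin_pos_of_mem (α : ℝ) (h : α ∈ Set.Ioo (0:ℝ) 2) : 0 < Real.sin (π * α / 2) := by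
  apply Real.sin_pos_of_pos_of_lt_pi
  · have := h.1; positivity
  · nlinarith [Real.pi_pos, h.1, h.2]

lemma key_hasDerivAt (α : ℝ) (h : α ∈ Set.Ioo (0:ℝ) 2) :
    HasDerivAt R1 (π * (π * α / 2 + Real.sin (π * α / 2) * Real.cos (π * α / 2)) /
      (α ^ 2 * Real.sin (π * α / 2) ^ 2)) α := by
  have hs : Real.sin (π * α / 2) ≠ 0 := (sin_pos_of_mem α h).ne'
  have ha : α ≠ 0 := h.1.ne'
  have hu : HasDerivAt (fun α : ℝ => π * α / 2) (π / 2) α := by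
    simpa using ((hasDerivAt_id α).const_mul π).div_const 2
  have hsin : HasDerivAt (fun α : ℝ => Real.sin (π * α / 2))
      (Real.cos (π * α / 2) * (π / 2)) α := (Real.hasDerivAt_sin _).comp α hu
  have hcos : HasDerivAt (fun α : ℝ => Real.cos (π * α / 2))
      (-Real.sin (π * α / 2) * (π / 2)) α := (Real.hasDerivAt_cos _).comp α hu
  have hq := hcos.div hsin hs
  have hfull := ((hq.const_mul (-π)).div (hasDerivAt_id α) ha)
  convert hfull using 1
  · rfl
  · rfl
  · rfl
  set s := Real.sin (π * α / 2) with hsdef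
  set c := Real.cos (π * α / 2) with hcdef
  have h1 : s ^ 2 + c ^ 2 = 1 := Real.sin_sq_add_cos_sq _
  simp only [id_eq, Pi.div_apply, ← hsdef, ← hcdef]
  field_simp
  linear_combination (-π*α) * h1

lemma aux_pos (t : ℝ) (h0 : 0 < t) (hπ : t < π) : 0 < t + Real.sin t * Real.cos t := by
  rcases le_or_gt t (π / 2) with hle | hlt
  · have hs := Real.sin_nonneg_of_nonneg_of_le_pi h0.le hπ.le
    have hc := Real.cos_nonneg_of_mem_Icc ⟨by linarith, hle⟩
    nlinarith
  · have h2 : -1 ≤ Real.sin t * Real.cos t := by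
      nlinarith [Real.neg_one_le_sin t, Real.sin_le_one t, Real.neg_one_le_cos t,
        Real.cos_le_one t]
    nlinarith [Real.pi_gt_three]

lemma R1_eq (α : ℝ) : R1 α = -(π * ((Real.cos (π * α / 2) / Real.sin (π * α / 2)) * α⁻¹)) := by
  rw [R1]; ring

theorem R1_strictMono_zero_tendsto :
    StrictMonoOn R1 (Set.Ioo (0 : ℝ) 2) ∧ R1 1 = 0 ∧
    Tendsto R1 (nhdsWithin 0 (Set.Ioi 0)) atBot ∧
    Tendsto R1 (nhdsWithin 2 (Set.Iio 2)) atTop := by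
  refine ⟨?_, ?_, ?_, ?_⟩
  · apply strictMonoOn_of_deriv_pos (convex_Ioo 0 2)
    · exact fun x hx => (key_hasDerivAt x hx).continuousAt.continuousWithinAt
    · intro x hx
      rw [interior_Ioo] at hx
      rw [(key_hasDerivAt x hx).deriv]
      have hs := sin_pos_of_mem x hx
      have hnum : 0 < π * x / 2 + Real.sin (π * x / 2) * Real.cos (π * x / 2) := by
        apply aux_pos
        · have := hx.1; positivity
        · nlinarith [Real.pi_pos, hx.1, hx.2]
      have hx0 := hx.1
      positivity
  · norm_num [R1, Real.cos_pi_div_two]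
  · have hsin0 : Tendsto (fun α => Real.sin (π * α / 2)) (nhdsWithin 0 (Set.Ioi (0:ℝ)))
        (nhdsWithin 0 (Set.Ioi (0:ℝ))) := by
      rw [tendsto_nhdsWithin_iff]
      constructor
      · apply Tendsto.mono_left _ nhdsWithin_le_nhds
        have : Continuous (fun α : ℝ => Real.sin (π * α / 2)) := by continuity
        simpa using this.tendsto 0
      · filter_upwards [Ioo_mem_nhdsGT_of_mem (by norm_num : (0:ℝ) ∈ Set.Ico 0 2)]
          with α hα using sin_pos_of_mem α hα
    have hinv : Tendsto (fun α => (Real.sin (π * α / 2))⁻¹)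
        (nhdsWithin 0 (Set.Ioi (0:ℝ))) atTop := tendsto_inv_nhdsGT_zero.comp hsin0
    have hcos : Tendsto (fun α => Real.cos (π * α / 2)) (nhdsWithin 0 (Set.Ioi (0:ℝ)))
        (nhds 1) := by
      apply Tendsto.mono_left _ nhdsWithin_le_nhds
      have : Continuous (fun α : ℝ => Real.cos (π * α / 2)) := by continuity
      simpa using this.tendsto 0
    have hq : Tendsto (fun α => Real.cos (π * α / 2) / Real.sin (π * α / 2))
        (nhdsWithin 0 (Set.Ioi (0:ℝ))) atTop := by
      simp only [div_eq_mul_inv]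
      exact Filter.Tendsto.pos_mul_atTop one_pos hcos hinv
    have hainv : Tendsto (fun α : ℝ => α⁻¹) (nhdsWithin 0 (Set.Ioi (0:ℝ))) atTop :=
      tendsto_inv_nhdsGT_zero
    have hprod := Filter.Tendsto.atTop_mul_atTop₀ hq hainv
    apply Tendsto.congr (fun α => (R1_eq α).symm)
    exact tendsto_neg_atBot_iff.mpr (hprod.const_mul_atTop Real.pi_pos)
  · have hsin2 : Tendsto (fun α => Real.sin (π * α / 2)) (nhdsWithin 2 (Set.Iio (2:ℝ)))
        (nhdsWithin 0 (Set.Ioi (0:ℝ))) := by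
      rw [tendsto_nhdsWithin_iff]
      constructor
      · apply Tendsto.mono_left _ nhdsWithin_le_nhds
        have : Continuous (fun α : ℝ => Real.sin (π * α / 2)) := by continuity
        have h2 := this.tendsto 2
        simpa [Real.sin_pi] using h2
      · filter_upwards [Ioo_mem_nhdsLT_of_mem (by norm_num : (2:ℝ) ∈ Set.Ioc 0 2)]
          with α hα using sin_pos_of_mem α hα
    have hinv : Tendsto (fun α => (Real.sin (π * α / 2))⁻¹)
        (nhdsWithin 2 (Set.Iio (2:ℝ))) atTop := tendsto_inv_nhdsGT_zero.comp hsin2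
    have hcos : Tendsto (fun α => Real.cos (π * α / 2)) (nhdsWithin 2 (Set.Iio (2:ℝ)))
        (nhds (-1)) := by
      apply Tendsto.mono_left _ nhdsWithin_le_nhds
      have : Continuous (fun α : ℝ => Real.cos (π * α / 2)) := by continuity
      have h2 := this.tendsto 2
      simpa [Real.cos_pi] using h2
    have hq : Tendsto (fun α => Real.cos (π * α / 2) / Real.sin (π * α / 2))
        (nhdsWithin 2 (Set.Iio (2:ℝ))) atBot := by
      simp only [div_eq_mul_inv]
      exact Filter.Tendsto.neg_mul_atTop (by norm_num) hcos hinv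
    have hainv : Tendsto (fun α : ℝ => α⁻¹) (nhdsWithin 2 (Set.Iio (2:ℝ)))
        (nhds (2⁻¹ : ℝ)) :=
      ((continuousAt_inv₀ (two_ne_zero)).tendsto).mono_left nhdsWithin_le_nhds
    have hprod : Tendsto (fun α => (Real.cos (π * α / 2) / Real.sin (π * α / 2)) * α⁻¹)
        (nhdsWithin 2 (Set.Iio (2:ℝ))) atBot :=
      Filter.Tendsto.atBot_mul_pos (by norm_num) hq hainv
    apply Tendsto.congr (fun α => (R1_eq α).symm)
    exact tendsto_neg_atTop_iff.mpr (hprod.const_mul_atBot Real.pi_pos)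
end

section
/- Let α ∈ (0,2), β ∈ (0,1), and x > 0. Then ∫_x^∞ (1 - (1 + y/x)^{-β}) · y^{-α-1} dy = x^{-α}/α - x^{-α} · ₂F₁(β, α+β, 1+α+β; -1)/(α+β). -/
open MeasureTheory

/-- The Gauss hypergeometric function `₂F₁(a,b,c;z)`, via the Euler integral
representation (valid for `c > b > 0`). -/
noncomputable def hyp2F1 (a b c z : ℝ) : ℝ :=
  (Real.Gamma c / (Real.Gamma b * Real.Gamma (c - b))) *
    ∫ t in (0:ℝ)..1, t ^ (b - 1) * (1 - t) ^ (c - b - 1) * (1 - t * z) ^ (-a)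

theorem integral_one_sub_rpow_eval (α β x : ℝ) (hα : α ∈ Set.Ioo (0 : ℝ) 2)
    (hβ : β ∈ Set.Ioo (0 : ℝ) 1) (hx : 0 < x) :
    ∫ y in Set.Ioi x, (1 - (1 + y / x) ^ (-β)) * y ^ (-α - 1) =
      x ^ (-α) / α - x ^ (-α) * hyp2F1 β (α + β) (1 + α + β) (-1) / (α + β) := by
  obtain ⟨hα0, hα2⟩ := hα
  obtain ⟨hβ0, hβ1⟩ := hβ
  have hab : (0:ℝ) < α + β := by linarith
  set I : ℝ := ∫ t in (0:ℝ)..1, t ^ (α + β - 1) * (1 + t) ^ (-β) with hIdef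
  -- Evaluation of the hypergeometric function
  have hhyp : hyp2F1 β (α + β) (1 + α + β) (-1) = (α + β) * I := by
    rw [hyp2F1]
    have hInt : (∫ t in (0:ℝ)..1,
        t ^ (α + β - 1) * (1 - t) ^ (1 + α + β - (α + β) - 1) * (1 - t * (-1)) ^ (-β)) = I := by
      rw [hIdef]
      congr 1
      ext t
      have h0 : (1:ℝ) + α + β - (α + β) - 1 = 0 := by ring
      rw [h0, Real.rpow_zero, mul_one, show 1 - t * (-1) = 1 + t by ring]
    rw [hInt]
    have h1 : (1:ℝ) + α + β - (α + β) = 1 := by ring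
    rw [h1, Real.Gamma_one, mul_one, show (1:ℝ) + α + β = (α + β) + 1 by ring,
      Real.Gamma_add_one hab.ne']
    field_simp [(Real.Gamma_pos_of_pos hab).ne']
  -- Integrability facts
  have hint1 : IntegrableOn (fun y : ℝ => y ^ (-α - 1)) (Set.Ioi x) :=
    integrableOn_Ioi_rpow_of_lt (by linarith) hx
  have hint2 : IntegrableOn (fun y : ℝ => (1 + y / x) ^ (-β) * y ^ (-α - 1)) (Set.Ioi x) := by
    refine hint1.mono' ?_ ?_
    · refine ContinuousOn.aestronglyMeasurable (ContinuousOn.mul ?_ ?_) measurableSet_Ioi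
      · exact (continuousOn_const.add (continuous_id.continuousOn.div_const x)).rpow_const
          fun y hy => Or.inl (by have := hx.trans hy; positivity : (0:ℝ) < 1 + y / x).ne'
      · exact continuous_id.continuousOn.rpow_const
          fun y hy => Or.inl (hx.trans hy).ne'
    · filter_upwards [ae_restrict_mem measurableSet_Ioi] with y hy
      have hy0 : 0 < y := hx.trans hy
      have hyx : 0 ≤ y / x := by positivity
      rw [Real.norm_eq_abs, abs_mul, abs_of_nonneg (Real.rpow_nonneg (by linarith) _),
        abs_of_nonneg (Real.rpow_nonneg hy0.le _)]
      have h1 : (1 + y / x) ^ (-β) ≤ 1 :=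
        Real.rpow_le_one_of_one_le_of_nonpos (by linarith) (by linarith)
      have h2 : 0 ≤ y ^ (-α - 1) := Real.rpow_nonneg hy0.le _
      nlinarith
  -- Split the integral
  have hsplit : (∫ y in Set.Ioi x, (1 - (1 + y / x) ^ (-β)) * y ^ (-α - 1)) =
      (∫ y in Set.Ioi x, y ^ (-α - 1)) -
        ∫ y in Set.Ioi x, (1 + y / x) ^ (-β) * y ^ (-α - 1) := by
    rw [← integral_sub hint1 hint2]
    exact setIntegral_congr_fun measurableSet_Ioi fun y _ => by ring
  -- First integral
  have hfirst : (∫ y in Set.Ioi x, y ^ (-α - 1)) = x ^ (-α) / α := by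
    rw [integral_Ioi_rpow_of_lt (by linarith) hx, show -α - 1 + 1 = -α by ring]
    rw [neg_div, div_neg, neg_neg]
  -- Change of variables y = x / t
  have hmap : (fun t : ℝ => x / t) '' Set.Ioo 0 1 = Set.Ioi x := by
    ext y
    constructor
    · rintro ⟨t, ⟨ht0, ht1⟩, rfl⟩
      exact Set.mem_Ioi.mpr ((lt_div_iff₀ ht0).mpr (by nlinarith))
    · intro hy
      have hy' : x < y := hy
      have hy0 : 0 < y := hx.trans hy'
      refine ⟨x / y, ⟨by positivity, (div_lt_one hy0).mpr hy'⟩, ?_⟩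
      field_simp
  have hderiv : ∀ t ∈ Set.Ioo (0:ℝ) 1,
      HasDerivWithinAt (fun t : ℝ => x / t) (-(x / t ^ 2)) (Set.Ioo 0 1) t := by
    intro t ht
    have h : HasDerivAt (fun t : ℝ => x / t) (-(x / t ^ 2)) t := by
      simpa [div_eq_mul_inv, mul_neg] using (hasDerivAt_inv ht.1.ne').const_mul x
    exact h.hasDerivWithinAt
  have hinj : Set.InjOn (fun t : ℝ => x / t) (Set.Ioo 0 1) := by
    intro a ha b hb h
    have h' : x / a = x / b := h
    rw [div_eq_div_iff ha.1.ne' hb.1.ne'] at h'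
    have := mul_left_cancel₀ hx.ne' h'
    linarith
  have hCV : (∫ y in Set.Ioi x, (1 + y / x) ^ (-β) * y ^ (-α - 1)) =
      ∫ t in Set.Ioo (0:ℝ) 1, x ^ (-α) * (t ^ (α + β - 1) * (1 + t) ^ (-β)) := by
    rw [← hmap, integral_image_eq_integral_abs_deriv_smul measurableSet_Ioo hderiv hinj]
    refine setIntegral_congr_fun measurableSet_Ioo fun t ht => ?_
    obtain ⟨ht0, ht1⟩ := ht
    rw [smul_eq_mul, abs_neg, abs_of_pos (by positivity : (0:ℝ) < x / t ^ 2)]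
    have h1 : 1 + (x / t) / x = (1 + t) / t := by field_simp; ring
    have e1 : (x / t) ^ (-α - 1) = x ^ (-α - 1) * t ^ (α + 1) := by
      rw [Real.div_rpow hx.le ht0.le, show (-α - 1 : ℝ) = -(α + 1) by ring,
        Real.rpow_neg ht0.le, div_inv_eq_mul]
    have e2 : ((1 + t) / t) ^ (-β) = (1 + t) ^ (-β) * t ^ β := by
      rw [Real.div_rpow (by linarith) ht0.le, Real.rpow_neg ht0.le, div_inv_eq_mul]
    rw [h1, e1, e2]
    have e3 : x ^ (-α - 1) = x ^ (-α) * x⁻¹ := by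
      rw [show (-α - 1 : ℝ) = -α + (-1) by ring, Real.rpow_add hx, Real.rpow_neg_one]
    have e4 : t ^ (α + β - 1) = t ^ β * t ^ (α + 1) * (t ^ 2)⁻¹ := by
      rw [← Real.rpow_natCast t 2, ← Real.rpow_neg ht0.le, ← Real.rpow_add ht0,
        ← Real.rpow_add ht0]
      norm_num
      congr 1
      ring
    rw [e3, e4]
    field_simp
  have hIoo : (∫ t in Set.Ioo (0:ℝ) 1, x ^ (-α) * (t ^ (α + β - 1) * (1 + t) ^ (-β))) =
      x ^ (-α) * I := by
    rw [MeasureTheory.integral_const_mul, hIdef,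
      intervalIntegral.integral_of_le (zero_le_one), integral_Ioc_eq_integral_Ioo]
  rw [hsplit, hfirst, hCV, hIoo, hhyp]
  field_simp
end

section
/- Let α ∈ (0,2) and β ∈ (0,1] with β < α, and let x > 0. Then ∫_x^∞ ((1 + y/x)^β - 1) · y^{-α-1} dy = -x^{-α}/α + x^{-α} · ₂F₁(-β, α-β, 1+α-β; -1)/(α-β). -/
open MeasureTheory

theorem integral_rpow_sub_one_eval (α β x : ℝ) (hα : α ∈ Set.Ioo (0 : ℝ) 2)
    (hβ : β ∈ Set.Ioc (0 : ℝ) 1) (hβα : β < α) (hx : 0 < x) :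
    ∫ y in Set.Ioi x, ((1 + y / x) ^ β - 1) * y ^ (-α - 1) =
      -(x ^ (-α)) / α + x ^ (-α) * hyp2F1 (-β) (α - β) (1 + α - β) (-1) / (α - β) := by
  obtain ⟨hα0, hα2⟩ := hα
  obtain ⟨hβ0, hβ1⟩ := hβ
  have hc : (0:ℝ) < α - β := sub_pos.2 hβα
  set I : ℝ := ∫ t in Set.Ioo (0:ℝ) 1, (1 + t) ^ β * t ^ (α - β - 1) with hI
  -- Step A: the hypergeometric value
  have hA : hyp2F1 (-β) (α - β) (1 + α - β) (-1) = (α - β) * I := by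
    unfold hyp2F1
    have h1 : Real.Gamma (1 + α - β) = (α - β) * Real.Gamma (α - β) := by
      rw [show (1 + α - β) = (α - β) + 1 by ring, Real.Gamma_add_one hc.ne']
    have hG : Real.Gamma (α - β) ≠ 0 := (Real.Gamma_pos_of_pos hc).ne'
    have h2 : (1 + α - β) - (α - β) = 1 := by ring
    rw [h1, h2, Real.Gamma_one, mul_one]
    have h3 : (fun t : ℝ => t ^ (α - β - 1) * (1 - t) ^ ((1:ℝ) - 1)
        * (1 - t * (-1)) ^ (-(-β))) = fun t : ℝ => (1 + t) ^ β * t ^ (α - β - 1) := by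
      funext t
      rw [show ((1:ℝ) - 1 : ℝ) = 0 by norm_num, Real.rpow_zero, neg_neg,
        mul_neg_one, sub_neg_eq_add, mul_one, mul_comm]
    rw [h3, intervalIntegral.integral_of_le zero_le_one, integral_Ioc_eq_integral_Ioo, ← hI]
    field_simp
  -- substitution t ↦ x / t
  have himg : (fun t : ℝ => x / t) '' Set.Ioo 0 1 = Set.Ioi x := by
    ext y
    constructor
    · rintro ⟨t, ⟨ht0, ht1⟩, rfl⟩
      exact Set.mem_Ioi.2 ((lt_div_iff₀ ht0).2 (by nlinarith))
    · intro hy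
      have hy' : x < y := hy
      refine ⟨x / y, ⟨div_pos hx (hx.trans hy'), (div_lt_one (hx.trans hy')).2 hy'⟩, ?_⟩
      field_simp
  have hderiv : ∀ t ∈ Set.Ioo (0:ℝ) 1,
      HasDerivWithinAt (fun t : ℝ => x / t) (-(x / t ^ 2)) (Set.Ioo 0 1) t := by
    intro t ht
    have h := ((hasDerivAt_inv ht.1.ne').const_mul x).hasDerivWithinAt
      (s := Set.Ioo (0:ℝ) 1)
    simp only [div_eq_mul_inv]
    rw [show -(x * (t ^ 2)⁻¹) = x * -(t ^ 2)⁻¹ by ring]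
    exact h
  have hinj : Set.InjOn (fun t : ℝ => x / t) (Set.Ioo 0 1) := by
    intro a ha b hb h
    have ha0 := ha.1.ne'
    have hb0 := hb.1.ne'
    field_simp at h
    exact h.symm
  have key : ∫ y in Set.Ioi x, ((1 + y / x) ^ β - 1) * y ^ (-α - 1)
      = ∫ t in Set.Ioo (0:ℝ) 1,
          (x ^ (-α) * ((1 + t) ^ β * t ^ (α - β - 1)) - x ^ (-α) * t ^ (α - 1)) := by
    rw [← himg, integral_image_eq_integral_abs_deriv_smul measurableSet_Ioo hderiv hinj]
    refine setIntegral_congr_fun measurableSet_Ioo fun t ht => ?_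
    obtain ⟨ht0, ht1⟩ := ht
    have htx : (0:ℝ) < x / t := by positivity
    have e0 : |(-(x / t ^ 2))| = x / t ^ 2 := by
      rw [abs_neg, abs_of_pos (by positivity)]
    have e1 : (x / t) / x = t⁻¹ := by field_simp
    have e2 : (1 + t⁻¹) = (1 + t) / t := by field_simp; ring
    have e3 : ((1 + t) / t) ^ β = (1 + t) ^ β / t ^ β := by
      rw [Real.div_rpow (by positivity) ht0.le]
    have e4 : (x / t) ^ (-α - 1) = x ^ (-α - 1) * t ^ (α + 1) := by
      rw [Real.div_rpow hx.le ht0.le, div_eq_mul_inv, ← Real.rpow_neg ht0.le]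
      ring_nf
    have e5 : x * x ^ (-α - 1) = x ^ (-α) := by
      nth_rewrite 1 [← Real.rpow_one x]
      rw [← Real.rpow_add hx]; ring_nf
    have e6 : t ^ (α + 1) / t ^ (2:ℕ) = t ^ (α - 1) := by
      rw [← Real.rpow_natCast t 2, ← Real.rpow_sub ht0]
      congr 1
      push_cast
      ring
    have e7 : t ^ (α - 1) / t ^ β = t ^ (α - β - 1) := by
      rw [← Real.rpow_sub ht0]; ring_nf
    simp only [smul_eq_mul, e0, e1, e2, e3, e4]
    rw [show x / t ^ 2 * (((1 + t) ^ β / t ^ β - 1) * (x ^ (-α - 1) * t ^ (α + 1)))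
        = (x * x ^ (-α - 1)) * (t ^ (α + 1) / t ^ (2:ℕ)) * ((1 + t) ^ β / t ^ β - 1) by
      push_cast; ring, e5, e6]
    have e8 : t ^ (α - 1) * ((1 + t) ^ β / t ^ β) = (1 + t) ^ β * t ^ (α - β - 1) := by
      rw [mul_comm, div_mul_eq_mul_div, mul_div_assoc, e7]
    rw [mul_sub, mul_one, mul_assoc, e8]
  -- integrability on Ioo 0 1
  have hrpow1 : IntegrableOn (fun t : ℝ => t ^ (α - β - 1)) (Set.Ioo (0:ℝ) 1) := by
    exact ((intervalIntegral.intervalIntegrable_rpow' (a := 0) (b := 1)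
      (r := α - β - 1) (by linarith)).1).mono_set Set.Ioo_subset_Ioc_self
  have hrpow2 : IntegrableOn (fun t : ℝ => t ^ (α - 1)) (Set.Ioo (0:ℝ) 1) := by
    exact ((intervalIntegral.intervalIntegrable_rpow' (a := 0) (b := 1)
      (r := α - 1) (by linarith)).1).mono_set Set.Ioo_subset_Ioc_self
  have hInt1 : IntegrableOn (fun t : ℝ => (1 + t) ^ β * t ^ (α - β - 1))
      (Set.Ioo (0:ℝ) 1) := by
    refine Integrable.bdd_mul (c := 2 ^ β) hrpow1 ?_ ?_
    · exact (((continuous_const.add continuous_id).rpow_const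
        fun t => Or.inr hβ0.le)).aestronglyMeasurable.restrict
    · refine (ae_restrict_iff' measurableSet_Ioo).2 (ae_of_all _ fun t ht => ?_)
      obtain ⟨ht0, ht1⟩ := ht
      rw [Real.norm_eq_abs, abs_of_nonneg (Real.rpow_nonneg (by linarith) _)]
      exact Real.rpow_le_rpow (by linarith) (by linarith) hβ0.le
  have hint2 : ∫ t in Set.Ioo (0:ℝ) 1, t ^ (α - 1) = 1 / α := by
    rw [← integral_Ioc_eq_integral_Ioo, ← intervalIntegral.integral_of_le zero_le_one,
      integral_rpow (Or.inl (by linarith))]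
    rw [show α - 1 + 1 = α by ring, Real.one_rpow, Real.zero_rpow hα0.ne']
    norm_num
  rw [key, integral_sub (hInt1.const_mul _) (hrpow2.const_mul _),
    integral_const_mul, integral_const_mul, hint2, hA, ← hI]
  have h1 : α ≠ 0 := hα0.ne'
  have h2 : α - β ≠ 0 := hc.ne'
  field_simp
  ring
end

section
/- Let α ∈ (0,2), β ∈ (0,1), x > 1, and consider the integral I(x) := ∫_{1+x}^∞ (1 - (1 + y/(1+x))^{-β}) y^{-α-1} dy. Then (1+x)^α · I(x) = 1/α - ₂F₁(β, α+β, 1+α+β; -1)/(α+β). -/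
open MeasureTheory

open Set in
/-- The substitution `u = 1/t` sends `∫_1^∞ (1+u)^{-β} u^{-α-1} du` to the Euler-type
integral `∫_0^1 t^{α+β-1} (1+t)^{-β} dt`. -/
lemma key_subst (α β : ℝ) (_hα : 0 < α) (_hβ : 0 < β) :
    ∫ u in Set.Ioi (1:ℝ), (1 + u) ^ (-β) * u ^ (-α - 1) =
      ∫ t in Set.Ioo (0:ℝ) 1, t ^ (α + β - 1) * (1 + t) ^ (-β) := by
  have himg : (fun t : ℝ => t⁻¹) '' Set.Ioo 0 1 = Set.Ioi 1 := by
    ext u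
    constructor
    · rintro ⟨t, ⟨ht0, ht1⟩, rfl⟩
      exact (one_lt_inv_iff₀).2 ⟨ht0, ht1⟩
    · intro hu
      have hu0 : (0:ℝ) < u := lt_trans one_pos hu
      exact ⟨u⁻¹, ⟨inv_pos.2 hu0, inv_lt_one_of_one_lt₀ hu⟩, inv_inv u⟩
  have hderiv : ∀ t ∈ Set.Ioo (0:ℝ) 1, HasDerivWithinAt (fun t : ℝ => t⁻¹)
      (-(t ^ 2)⁻¹) (Set.Ioo (0:ℝ) 1) t := fun t ht =>
    (hasDerivAt_inv ht.1.ne').hasDerivWithinAt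
  have hinj : Set.InjOn (fun t : ℝ => t⁻¹) (Set.Ioo 0 1) := fun a _ b _ h => inv_injective h
  have := integral_image_eq_integral_abs_deriv_smul (measurableSet_Ioo)
    hderiv hinj (fun u => (1 + u) ^ (-β) * u ^ (-α - 1))
  rw [himg] at this
  rw [this]
  refine setIntegral_congr_fun measurableSet_Ioo fun t ht => ?_
  obtain ⟨ht0, ht1⟩ := ht
  have h1t : (0:ℝ) < 1 + t := by linarith
  have hsplit : (1 + t⁻¹) = (1 + t) * t⁻¹ := by field_simp; ring
  rw [smul_eq_mul, abs_neg, abs_inv, abs_of_pos (by positivity : (0:ℝ) < t ^ 2),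
    hsplit, Real.mul_rpow h1t.le (by positivity), Real.inv_rpow ht0.le,
    Real.inv_rpow ht0.le, ← Real.rpow_neg ht0.le, ← Real.rpow_neg ht0.le,
    neg_neg, show -(-α - 1) = α + 1 by ring]
  have h2 : ((t:ℝ) ^ 2)⁻¹ = t ^ (-2 : ℝ) := by
    rw [← Real.rpow_natCast t 2, ← Real.rpow_neg ht0.le]
    norm_num
  have e1 : t ^ (-2 : ℝ) * (t ^ β * t ^ (α + 1)) = t ^ (α + β - 1) := by
    rw [← Real.rpow_add ht0, ← Real.rpow_add ht0]; ring_nf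
  calc (t ^ 2)⁻¹ * ((1 + t) ^ (-β) * t ^ β * t ^ (α + 1))
      = t ^ (-2 : ℝ) * (t ^ β * t ^ (α + 1)) * (1 + t) ^ (-β) := by rw [h2]; ring
    _ = t ^ (α + β - 1) * (1 + t) ^ (-β) := by rw [e1]

theorem big_jump_integral_eval (α β x : ℝ) (hα : α ∈ Set.Ioo (0 : ℝ) 2)
    (hβ : β ∈ Set.Ioo (0 : ℝ) 1) (hx : 1 < x) :
    (1 + x) ^ α *
      ∫ y in Set.Ioi (1 + x), (1 - (1 + y / (1 + x)) ^ (-β)) * y ^ (-α - 1) =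
      1 / α - hyp2F1 β (α + β) (1 + α + β) (-1) / (α + β) := by
  obtain ⟨hα0, hα2⟩ := hα
  obtain ⟨hβ0, hβ1⟩ := hβ
  set c : ℝ := 1 + x with hc_def
  have hc : (0:ℝ) < c := by simp [hc_def]; linarith
  set J : ℝ := ∫ u in Set.Ioi (1:ℝ), (1 - (1 + u) ^ (-β)) * u ^ (-α - 1) with hJ_def
  -- Step 1: rescale
  have step1 : (∫ y in Set.Ioi c, (1 - (1 + y / c) ^ (-β)) * y ^ (-α - 1)) =
      c * (c ^ (-α - 1) * J) := by
    have := integral_comp_mul_left_Ioi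
      (fun y => (1 - (1 + y / c) ^ (-β)) * y ^ (-α - 1)) 1 hc
    rw [mul_one, smul_eq_mul] at this
    have h2 : (∫ u in Set.Ioi (1:ℝ), (1 - (1 + c * u / c) ^ (-β)) * (c * u) ^ (-α - 1)) =
        ∫ u in Set.Ioi (1:ℝ), c ^ (-α - 1) * ((1 - (1 + u) ^ (-β)) * u ^ (-α - 1)) := by
      refine setIntegral_congr_fun measurableSet_Ioi fun u hu => ?_
      have hu0 : (0:ℝ) < u := lt_trans one_pos hu
      rw [mul_div_cancel_left₀ _ hc.ne', Real.mul_rpow hc.le hu0.le]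
      ring
    rw [h2, integral_const_mul] at this
    beta_reduce at this
    rw [inv_mul_eq_div, eq_div_iff hc.ne'] at this
    rw [← this]; ring
  -- Step 2: split the integral
  have int1 : IntegrableOn (fun u : ℝ => u ^ (-α - 1)) (Set.Ioi 1) :=
    integrableOn_Ioi_rpow_of_lt (by linarith) one_pos
  have int2 : IntegrableOn (fun u : ℝ => (1 + u) ^ (-β) * u ^ (-α - 1)) (Set.Ioi 1) := by
    refine Integrable.mono int1 ?_ ?_
    · refine ((ContinuousOn.rpow_const (continuousOn_const.add continuousOn_id)
        fun u hu => Or.inl (ne_of_gt (by simp only [Set.mem_Ioi] at hu; simp only [Pi.add_apply, id_eq]; linarith))).mul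
        (ContinuousOn.rpow_const continuousOn_id
        fun u hu => Or.inl (ne_of_gt (by simp only [Set.mem_Ioi] at hu; simp only [id_eq]; linarith)))).aestronglyMeasurable
        measurableSet_Ioi
    · filter_upwards [ae_restrict_mem measurableSet_Ioi] with u hu
      have hu1 : (1:ℝ) < u := hu
      have hu0 : (0:ℝ) < u := lt_trans one_pos hu1
      have hb : (1 + u) ^ (-β) ≤ 1 :=
        Real.rpow_le_one_of_one_le_of_nonpos (by linarith) (by linarith)
      have hpos : (0:ℝ) ≤ (1 + u) ^ (-β) * u ^ (-α - 1) := by positivity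
      rw [Real.norm_eq_abs, Real.norm_eq_abs, abs_of_nonneg hpos,
        abs_of_nonneg (by positivity : (0:ℝ) ≤ u ^ (-α - 1))]
      calc (1 + u) ^ (-β) * u ^ (-α - 1) ≤ 1 * u ^ (-α - 1) :=
            mul_le_mul_of_nonneg_right hb (by positivity)
        _ = u ^ (-α - 1) := one_mul _
  have step2 : J = 1 / α - ∫ u in Set.Ioi (1:ℝ), (1 + u) ^ (-β) * u ^ (-α - 1) := by
    have hsplit : J = (∫ u in Set.Ioi (1:ℝ),
        (u ^ (-α - 1) - (1 + u) ^ (-β) * u ^ (-α - 1))) := by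
      rw [hJ_def]
      exact setIntegral_congr_fun measurableSet_Ioi fun u _ => by ring
    rw [hsplit, integral_sub int1 int2, integral_Ioi_rpow_of_lt (by linarith) one_pos]
    rw [Real.one_rpow]
    field_simp
    rw [show -α - 1 + 1 = -α by ring, one_div_neg_eq_neg_one_div, neg_neg, mul_sub,
      mul_one_div_cancel hα0.ne']
  -- Step 3: evaluate the hypergeometric function
  have hab : (0:ℝ) < α + β := by linarith
  have step3 : hyp2F1 β (α + β) (1 + α + β) (-1) / (α + β) =
      ∫ t in Set.Ioo (0:ℝ) 1, t ^ (α + β - 1) * (1 + t) ^ (-β) := by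
    have hG : Real.Gamma (1 + α + β) = (α + β) * Real.Gamma (α + β) := by
      rw [show (1:ℝ) + α + β = (α + β) + 1 by ring, Real.Gamma_add_one hab.ne']
    have hGsub : (1:ℝ) + α + β - (α + β) = 1 := by ring
    have hint : (∫ t in (0:ℝ)..1, t ^ (α + β - 1) * (1 - t) ^ (1 + α + β - (α + β) - 1)
        * (1 - t * (-1)) ^ (-β)) = ∫ t in (0:ℝ)..1, t ^ (α + β - 1) * (1 + t) ^ (-β) := by
      refine intervalIntegral.integral_congr fun t _ => ?_
      rw [show (1:ℝ) + α + β - (α + β) - 1 = 0 by ring, Real.rpow_zero,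
        show (1:ℝ) - t * (-1) = 1 + t by ring]
      ring
    have hcoef : Real.Gamma (1 + α + β) / (Real.Gamma (α + β) * Real.Gamma 1) = α + β := by
      rw [hG, Real.Gamma_one, mul_one,
        mul_div_assoc, div_self (Real.Gamma_pos_of_pos hab).ne', mul_one]
    rw [hyp2F1, hint, hGsub, hcoef, mul_div_cancel_left₀ _ hab.ne',
      intervalIntegral.integral_of_le zero_le_one,
      MeasureTheory.integral_Ioc_eq_integral_Ioo]
  rw [step1, step3, ← key_subst α β hα0 hβ0, ← step2]
  have hpow : c ^ α * (c * c ^ (-α - 1)) = 1 := by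
    nth_rewrite 2 [← Real.rpow_one c]
    rw [← Real.rpow_add hc, ← Real.rpow_add hc]
    norm_num
  calc c ^ α * (c * (c ^ (-α - 1) * J)) = (c ^ α * (c * c ^ (-α - 1))) * J := by ring
    _ = J := by rw [hpow, one_mul]
end
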